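/- In the simply typed λ-calculus, if t and s are typable terms of maximal redex degree strictly less than k, the type of s has height strictly less than k, and x is a variable of the same type as s, then the maximal redex degree of t[x := s] is strictly less than k. -/
import Mathlib


namespace STLC

/-- Simple types: base types and arrow types. -/
inductive Ty : Type
  | base : ℕ → Ty
  | arr : Ty → Ty → Ty
deriving DecidableEq

/-- The height of a type. -/
def Ty.height : Ty → ℕ
  | .base _ => 0
  | .arr A B => 1 + max A.height B.height

/-- Terms of the simply typed λ-calculus à la Church, with typed variables. -/
inductive Tm : Type
  | var : ℕ → Ty → Tm
  | lam : ℕ → Ty → Tm → Tm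
  | app : Tm → Tm → Tm
deriving DecidableEq

/-- Capture-avoiding substitution `t[x^B := s]` (bound variables assumed suitably renamed). -/
def Tm.subst : Tm → ℕ → Ty → Tm → Tm
  | .var y C, x, B, s => if y = x ∧ C = B then s else .var y C
  | .lam y C t, x, B, s =>
      if y = x ∧ C = B then .lam y C t else .lam y C (t.subst x B s)
  | .app t u, x, B, s => .app (t.subst x B s) (u.subst x B s)

/-- The (unique) type of a term, if typable. -/
def Tm.typeof : Tm → Option Ty
  | .var _ A => some A
  | .lam _ A t => (t.typeof).map (Ty.arr A)
  | .app t u =>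
      match t.typeof, u.typeof with
      | some (.arr A B), some A' => if A = A' then some B else none
      | _, _ => none

/-- Whether a term is an abstraction. -/
def Tm.isAbs : Tm → Prop
  | .lam _ _ _ => True
  | _ => False

/-- The max-degree of a term: the maximum of the heights of the types of the
abstractions of its redexes, or `0` if it has no redex. -/
def Tm.maxdeg : Tm → ℕ
  | .var _ _ => 0
  | .lam _ _ t => t.maxdeg
  | .app t u =>
      max (max t.maxdeg u.maxdeg)
        (match t with
         | .lam _ _ _ => (t.typeof).elim 0 Ty.height
         | _ => 0)

lemma typeof_app {t u : Tm} {A : Ty} (h : (Tm.app t u).typeof = some A) :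
    ∃ A', t.typeof = some (.arr A' A) ∧ u.typeof = some A' := by
  unfold Tm.typeof at h
  cases htt : t.typeof with
  | none => rw [htt] at h; simp at h
  | some T =>
    rw [htt] at h
    cases T with
    | base n => cases huu : u.typeof <;> rw [huu] at h <;> simp at h
    | arr C D =>
      cases huu : u.typeof with
      | none => rw [huu] at h; simp at h
      | some U =>
        rw [huu] at h
        by_cases hc : C = U
        · subst hc
          simp at h
          subst h
          exact ⟨C, rfl, rfl⟩
        · simp [hc] at h

lemma typeof_subst {s : Tm} {x : ℕ} {B : Ty} (hs : s.typeof = some B) :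
    ∀ (t : Tm) (A : Ty), t.typeof = some A → (t.subst x B s).typeof = some A := by
  intro t
  induction t with
  | var y C =>
    intro A h
    simp [Tm.typeof] at h
    subst h
    by_cases hc : y = x ∧ C = B
    · obtain ⟨rfl, rfl⟩ := hc
      simp [Tm.subst, hs]
    · simp [Tm.subst, hc, Tm.typeof]
  | lam y C t ih =>
    intro A h
    simp [Tm.typeof, Option.map_eq_some_iff] at h
    obtain ⟨D, hD, rfl⟩ := h
    by_cases hc : y = x ∧ C = B
    · simp [Tm.subst, hc, Tm.typeof, hD]
    · simp [Tm.subst, hc, Tm.typeof, ih D hD]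
  | app t u iht ihu =>
    intro A h
    obtain ⟨A', h1, h2⟩ := typeof_app h
    show ((Tm.app (t.subst x B s) (u.subst x B s))).typeof = some A
    unfold Tm.typeof
    rw [iht _ h1, ihu _ h2]
    simp

/-- Substitution of a term of type height `< k` preserves max-degree `< k`. -/
theorem maxdeg_subst_lt (t s : Tm) (x : ℕ) (A B : Ty) (k : ℕ)
    (ht : t.typeof = some A) (hs : s.typeof = some B)
    (hmt : t.maxdeg < k) (hms : s.maxdeg < k) (hB : B.height < k) :
    (t.subst x B s).maxdeg < k := by
  induction t generalizing A with
  | var y C =>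
    by_cases hc : y = x ∧ C = B
    · simpa [Tm.subst, hc] using hms
    · simpa [Tm.subst, hc, Tm.maxdeg] using hmt
  | lam y C t ih =>
    by_cases hc : y = x ∧ C = B
    · simpa [Tm.subst, hc] using hmt
    · simp [Tm.typeof, Option.map_eq_some_iff] at ht
      obtain ⟨D, hD, rfl⟩ := ht
      simp [Tm.subst, hc, Tm.maxdeg]
      exact ih D hD (by simpa [Tm.maxdeg] using hmt)
  | app t u iht ihu =>
    obtain ⟨A', h1, h2⟩ := typeof_app ht
    simp only [Tm.maxdeg] at hmt
    have hmt1 : t.maxdeg < k := lt_of_le_of_lt (le_trans (le_max_left _ _) (le_max_left _ _)) hmt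
    have hmt2 : u.maxdeg < k := lt_of_le_of_lt (le_trans (le_max_right _ _) (le_max_left _ _)) hmt
    have h1' : (t.subst x B s).maxdeg < k := iht _ h1 hmt1
    have h2' : (u.subst x B s).maxdeg < k := ihu _ h2 hmt2
    show (Tm.app (t.subst x B s) (u.subst x B s)).maxdeg < k
    simp only [Tm.maxdeg]
    refine max_lt (max_lt h1' h2') ?_
    -- redex part
    cases t with
    | var y C =>
      by_cases hc : y = x ∧ C = B
      · -- subst is s
        simp only [Tm.subst, if_pos hc]
        cases s with
        | var _ _ => exact Nat.zero_lt_of_lt hB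
        | lam _ _ _ => simp [hs]; exact hB
        | app _ _ => exact Nat.lt_of_lt_of_le (Nat.zero_lt_of_lt hB) (le_refl k)
      · simp only [Tm.subst, if_neg hc]
        exact Nat.zero_lt_of_lt hB
    | lam y C t' =>
      by_cases hc : y = x ∧ C = B
      · simp only [Tm.subst, if_pos hc, h1]
        have : ((Tm.lam y C t').typeof).elim 0 Ty.height < k :=
          lt_of_le_of_lt (le_max_right _ _) hmt
        simpa [h1] using this
      · simp only [Tm.subst, if_neg hc]
        have h1'' := typeof_subst (x := x) hs (Tm.lam y C t') _ h1
        simp only [Tm.subst, if_neg hc] at h1''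
        have : ((Tm.lam y C t').typeof).elim 0 Ty.height < k :=
          lt_of_le_of_lt (le_max_right _ _) hmt
        simpa [h1'', h1] using this
    | app t1 t2 =>
      simp only [Tm.subst]
      exact Nat.zero_lt_of_lt hB

end STLC
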